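/- Let ℍ = {z ∈ ℂ : Im z > 0} be the upper half-plane, let m be a positive integer, and define Ω_m : ℍ × ℍ → ℂ by Ω_m(z,w) = (2i·√(Im z · Im w)/(z − conj(w)))^m, where √ is the nonnegative real square root. Then for every g = (a b; c d) ∈ SL(2,ℝ) acting on ℍ by Möbius transformations g·z = (az+b)/(cz+d): (a) |Ω_m(g·x, g·y)| = |Ω_m(x,y)| for all x, y ∈ ℍ; and (b) the 3-point function Δ(x,y,z) := Ω_m(x,y)·Ω_m(y,z)·Ω_m(z,x) is invariant: Δ(g·x, g·y, g·z) = Δ(x,y,z) for all x, y, z ∈ ℍ. In particular the normalized cocycle [Δ](x,y,z) = Δ(x,y,z)/|Ω_m(x,z)|² is invariant under orientation-preserving isometries of ℍ. -/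

import Mathlib

open MeasureTheory

/-- The equal-time propagator of the hyperbolic plane (upper half-plane model) at
`hbar = 2/m`: `Ω_m(z,w) = (2i·√(Im z · Im w)/(z − conj w))^m`. -/
noncomputable def hypPropagator (m : ℕ) (z w : ℂ) : ℂ :=
  (2 * Complex.I * (Real.sqrt (z.im * w.im) : ℂ) / (z - (starRingEnd ℂ) w)) ^ m

/-- Möbius action of a real 2×2 matrix `(a b; c d)` on `ℂ`. -/
noncomputable def moebius (a b c d : ℝ) (z : ℂ) : ℂ :=
  ((a : ℂ) * z + (b : ℂ)) / ((c : ℂ) * z + (d : ℂ))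

/-! Writing `j(w) = c w + d`, one has `g·x − conj (g·y) = (x − conj y) / (j(x) conj j(y))` and
`Im (g·w) = Im w / |j(w)|²`, so `Ω_m(g·x, g·y) = Ω_m(x, y) · (u(x) conj u(y))^m` with the unit
phase `u = j / |j|`. The phase drops out of absolute values, and in the cyclic product
`Ω_m(x,y) Ω_m(y,z) Ω_m(z,x)` each `u(p)` meets its own conjugate. -/

open ComplexConjugate

noncomputable def moebiusPhase (c d : ℝ) (z : ℂ) : ℂ :=
  ((c : ℂ) * z + d) / ‖(c : ℂ) * z + d‖

lemma moebius_denom_ne_zero {a b c d : ℝ} (hdet : a * d - b * c ≠ 0) {z : ℂ} (hz : 0 < z.im) :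
    (c : ℂ) * z + d ≠ 0 := by
  intro h
  have hc : c = 0 := by
    have him : c * z.im = 0 := by simpa using congrArg Complex.im h
    exact (mul_eq_zero.1 him).resolve_right hz.ne'
  have hd : d = 0 := by simpa [hc] using h
  simp [hc, hd] at hdet

lemma im_moebius (a b c d : ℝ) (z : ℂ) :
    (moebius a b c d z).im = (a * d - b * c) * z.im / Complex.normSq ((c : ℂ) * z + d) := by
  rw [moebius, Complex.div_im, div_sub_div_same]
  congr 1
  simp only [Complex.add_im, Complex.add_re, Complex.mul_im, Complex.mul_re, Complex.ofReal_re,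
    Complex.ofReal_im]
  ring

lemma moebius_sub_conj_moebius (a b c d : ℝ) {x y : ℂ}
    (hx : (c : ℂ) * x + d ≠ 0) (hy : (c : ℂ) * y + d ≠ 0) :
    moebius a b c d x - conj (moebius a b c d y) =
      ((a * d - b * c : ℝ) : ℂ) * (x - conj y) / (((c : ℂ) * x + d) * conj ((c : ℂ) * y + d)) := by
  have hy' : (c : ℂ) * conj y + d ≠ 0 := by
    simpa using (map_ne_zero (starRingEnd ℂ)).2 hy
  rw [moebius, moebius, map_div₀]
  simp only [map_add, map_mul, Complex.conj_ofReal]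
  rw [div_sub_div _ _ hx hy']
  push_cast
  ring

lemma norm_moebiusPhase {c d : ℝ} {z : ℂ} (hz : (c : ℂ) * z + d ≠ 0) :
    ‖moebiusPhase c d z‖ = 1 := by
  rw [moebiusPhase, norm_div, Complex.norm_real, norm_norm, div_self (norm_ne_zero_iff.2 hz)]

lemma hypPropagator_moebius (m : ℕ) {a b c d : ℝ} (hdet : a * d - b * c = 1) {x y : ℂ}
    (hx : 0 < x.im) (hy : 0 < y.im) :
    hypPropagator m (moebius a b c d x) (moebius a b c d y) =
      hypPropagator m x y * (moebiusPhase c d x * conj (moebiusPhase c d y)) ^ m := by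
  have hdet' : a * d - b * c ≠ 0 := by simp [hdet]
  have hjx := moebius_denom_ne_zero hdet' hx
  have hjy := moebius_denom_ne_zero hdet' hy
  have hsqrt : Real.sqrt ((moebius a b c d x).im * (moebius a b c d y).im) =
      Real.sqrt (x.im * y.im) / (‖(c : ℂ) * x + d‖ * ‖(c : ℂ) * y + d‖) := by
    rw [im_moebius, im_moebius, hdet, one_mul, one_mul, div_mul_div_comm,
      Real.sqrt_div (by positivity), Real.sqrt_mul (Complex.normSq_nonneg _),
      ← Complex.norm_def, ← Complex.norm_def]
  unfold hypPropagator moebiusPhase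
  rw [← mul_pow, moebius_sub_conj_moebius a b c d hjx hjy, hdet, Complex.ofReal_one, hsqrt,
    map_div₀, Complex.conj_ofReal]
  push_cast
  field_simp

lemma mul_conj_cyclic_eq_one {u v w : ℂ} (hu : ‖u‖ = 1) (hv : ‖v‖ = 1) (hw : ‖w‖ = 1) :
    (u * conj v) * (v * conj w) * (w * conj u) = 1 := by
  calc (u * conj v) * (v * conj w) * (w * conj u)
      = (u * conj u) * (v * conj v) * (w * conj w) := by ring
    _ = 1 := by simp [Complex.mul_conj', hu, hv, hw]

theorem hypPropagator_moebius_invariance_general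
    (m : ℕ) (a b c d : ℝ) (hdet : a * d - b * c = 1) :
    ∀ x y z : ℂ, 0 < x.im → 0 < y.im → 0 < z.im →
      (‖hypPropagator m (moebius a b c d x) (moebius a b c d y)‖ =
        ‖hypPropagator m x y‖) ∧
      (hypPropagator m (moebius a b c d x) (moebius a b c d y) *
        hypPropagator m (moebius a b c d y) (moebius a b c d z) *
        hypPropagator m (moebius a b c d z) (moebius a b c d x) =
        hypPropagator m x y * hypPropagator m y z * hypPropagator m z x) ∧
      (hypPropagator m (moebius a b c d x) (moebius a b c d y) *
        hypPropagator m (moebius a b c d y) (moebius a b c d z) *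
        hypPropagator m (moebius a b c d z) (moebius a b c d x) /
        ((‖hypPropagator m (moebius a b c d x) (moebius a b c d z)‖ : ℂ) ^ 2) =
        hypPropagator m x y * hypPropagator m y z * hypPropagator m z x /
        ((‖hypPropagator m x z‖ : ℂ) ^ 2)) := by
  intro x y z hx hy hz
  have hdet' : a * d - b * c ≠ 0 := by simp [hdet]
  have hphase {p : ℂ} (hp : 0 < p.im) : ‖moebiusPhase c d p‖ = 1 :=
    norm_moebiusPhase (moebius_denom_ne_zero hdet' hp)
  have hnorm {p q : ℂ} (hp : 0 < p.im) (hq : 0 < q.im) :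
      ‖hypPropagator m (moebius a b c d p) (moebius a b c d q)‖ = ‖hypPropagator m p q‖ := by
    rw [hypPropagator_moebius m hdet hp hq, norm_mul, norm_pow, norm_mul, Complex.norm_conj,
      hphase hp, hphase hq, one_mul, one_pow, mul_one]
  have hcyclic : hypPropagator m (moebius a b c d x) (moebius a b c d y) *
      hypPropagator m (moebius a b c d y) (moebius a b c d z) *
      hypPropagator m (moebius a b c d z) (moebius a b c d x) =
      hypPropagator m x y * hypPropagator m y z * hypPropagator m z x := by
    rw [hypPropagator_moebius m hdet hx hy, hypPropagator_moebius m hdet hy hz,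
      hypPropagator_moebius m hdet hz hx]
    calc _ = hypPropagator m x y * hypPropagator m y z * hypPropagator m z x *
          ((moebiusPhase c d x * conj (moebiusPhase c d y)) *
            (moebiusPhase c d y * conj (moebiusPhase c d z)) *
            (moebiusPhase c d z * conj (moebiusPhase c d x))) ^ m := by ring
      _ = _ := by rw [mul_conj_cyclic_eq_one (hphase hx) (hphase hy) (hphase hz), one_pow, mul_one]
  exact ⟨hnorm hx hy, hcyclic, by rw [hcyclic, hnorm hx hz]⟩

/-- For every `g = (a b; c d) ∈ SL(2,ℝ)` acting on the upper
half-plane by Möbius transformations: (a) `|Ω_m(g·x, g·y)| = |Ω_m(x,y)|`;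
(b) the 3-point function `Δ(x,y,z) = Ω_m(x,y)Ω_m(y,z)Ω_m(z,x)` is invariant;
and in particular (c) the normalized cocycle `[Δ] = Δ(x,y,z)/|Ω_m(x,z)|²` is invariant
under orientation-preserving isometries of `ℍ`. -/
theorem hypPropagator_moebius_invariance
    (m : ℕ) (hm : 0 < m) (a b c d : ℝ) (hdet : a * d - b * c = 1) :
    ∀ x y z : ℂ, 0 < x.im → 0 < y.im → 0 < z.im →
      (‖hypPropagator m (moebius a b c d x) (moebius a b c d y)‖ =
        ‖hypPropagator m x y‖) ∧
      (hypPropagator m (moebius a b c d x) (moebius a b c d y) *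
        hypPropagator m (moebius a b c d y) (moebius a b c d z) *
        hypPropagator m (moebius a b c d z) (moebius a b c d x) =
        hypPropagator m x y * hypPropagator m y z * hypPropagator m z x) ∧
      (hypPropagator m (moebius a b c d x) (moebius a b c d y) *
        hypPropagator m (moebius a b c d y) (moebius a b c d z) *
        hypPropagator m (moebius a b c d z) (moebius a b c d x) /
        ((‖hypPropagator m (moebius a b c d x) (moebius a b c d z)‖ : ℂ) ^ 2) =
        hypPropagator m x y * hypPropagator m y z * hypPropagator m z x /
        ((‖hypPropagator m x z‖ : ℂ) ^ 2)) :=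
  hypPropagator_moebius_invariance_general m a b c d hdet
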